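/- The map θ : (ℝ^{N+1} × ℝ^{N+1}, d_{ℝ^{2(N+1)}}) → (S_0, d*) sending (y, z) to f = (f_1, f_2), as well as its inverse θ^{−1}, is continuous, where d_{ℝ^{2(N+1)}}((y, z), (ȳ, z̄)) = max_{0 ≤ i ≤ N} max(|y_i − ȳ_i|, |z_i − z̄_i|) and d*(f, g) = sup_{x ∈ I} max(|f_1(x) − g_1(x)|, |f_2(x) − g_2(x)|). Consequently, S_0 (with its members extended by zero outside I) is a closed and complete subspace of L²(ℝ, ℝ²), and S_0^1 is a closed subspace of L²(ℝ). -/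

import Mathlib

/-!
The difference of two members of `S₀` is again a member, so it suffices to bound a single
`f ∈ S₀` whose interpolation data has size `d`. The fixed-point equation read at the endpoints
of `I`, which each `L_n` sends to nodes, bounds the affine forcing terms `p_n`, `q_n` by `3 d`
on `I`. Since the `L_n` cover `I`, at a point where `|f₂|` is maximal we get
`max |f₂| ≤ c max |f₂| + 3 d` with `c = max |γ_n| < 1`, and then likewise
`max |f₁| ≤ a max |f₁| + max |f₂| + 3 d` with `a = max |α_n| < 1`. So `sup_I ‖f‖ ≤ K d`,
which is the continuity of `θ`, while `θ⁻¹` is evaluation at the nodes. The same estimate makes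
evaluation at the nodes injective on `S₀`, so `S₀` is finite-dimensional and its image in `L²`
is closed.
-/

open Set MeasureTheory

/-- The affine contractive homeomorphism `L n` mapping `I = [x 0, x N]` onto the
`n`-th subinterval. -/
noncomputable def LMap {N : ℕ} (x : Fin (N + 1) → ℝ) (n : Fin N) (u : ℝ) : ℝ :=
  ((x n.succ - x n.castSucc) / (x (Fin.last N) - x 0)) * u +
    (x (Fin.last N) * x n.castSucc - x 0 * x n.succ) / (x (Fin.last N) - x 0)

/-- `f` is a fixed point of the operator `Φ_t`:  for every `n` and `u ∈ I`,
`f (L_n u) = F_n (u, f u)` where `F_n (u, y, z) = (α_n y + β_n z + p_n u, γ_n z + q_n u)`,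
the linear polynomials being `p_n u = (t n).1.1 * u + (t n).1.2` and
`q_n u = (t n).2.1 * u + (t n).2.2`. -/
def FixEq {N : ℕ} (x : Fin (N + 1) → ℝ) (α β γ : Fin N → ℝ)
    (t : Fin N → (ℝ × ℝ) × (ℝ × ℝ)) (f : ℝ → ℝ × ℝ) : Prop :=
  ∀ n : Fin N, ∀ u ∈ Icc (x 0) (x (Fin.last N)),
    f (LMap x n u) =
      (α n * (f u).1 + β n * (f u).2 + ((t n).1.1 * u + (t n).1.2),
       γ n * (f u).2 + ((t n).2.1 * u + (t n).2.2))

/-- `f` belongs to `B(I, ℝ²)`, the set of bounded functions on `I = [x 0, x N]`. -/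
def BddOnI {N : ℕ} (x : Fin (N + 1) → ℝ) (f : ℝ → ℝ × ℝ) : Prop :=
  ∃ M : ℝ, ∀ u ∈ Icc (x 0) (x (Fin.last N)), ‖f u‖ ≤ M

/-- The space `S₀` of pairs `f = (f₁, f₂)` where `f₁` is a CHFIF and `f₂` an AFIF
for some interpolation data over the fixed partition and parameters; members are
extended by `0` outside `I = [x 0, x N]`. -/
def S0set {N : ℕ} (x : Fin (N + 1) → ℝ) (α β γ : Fin N → ℝ) : Set (ℝ → ℝ × ℝ) :=
  {f | ContinuousOn f (Icc (x 0) (x (Fin.last N))) ∧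
       (∀ u ∉ Icc (x 0) (x (Fin.last N)), f u = 0) ∧
       ∃ t : Fin N → (ℝ × ℝ) × (ℝ × ℝ), FixEq x α β γ t f}

/-- The space `S₀¹` of CHFIFs: first components of members of `S₀`. -/
def S01set {N : ℕ} (x : Fin (N + 1) → ℝ) (α β γ : Fin N → ℝ) : Set (ℝ → ℝ) :=
  {g | ∃ f ∈ S0set x α β γ, g = fun u => (f u).1}


open scoped ENNReal

lemma abs_affine_le_of_mem_Icc {k l a b u M : ℝ} (hu : u ∈ Icc a b)
    (ha : |k * a + l| ≤ M) (hb : |k * b + l| ≤ M) : |k * u + l| ≤ M := by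
  rw [abs_le] at ha hb ⊢
  obtain ⟨hau, hub⟩ := hu
  rcases le_total 0 k with hk | hk
  · constructor <;> nlinarith [mul_le_mul_of_nonneg_left hau hk, mul_le_mul_of_nonneg_left hub hk]
  · constructor <;> nlinarith [mul_le_mul_of_nonpos_left hau hk, mul_le_mul_of_nonpos_left hub hk]

lemma abs_sub_mul_sub_mul_le {y z w a b d : ℝ} (hy : |y| ≤ d) (hz : |z| ≤ d) (hw : |w| ≤ d)
    (ha : |a| ≤ 1) (hb : |b| ≤ 1) : |y - a * z - b * w| ≤ 3 * d := by
  have haz : |a * z| ≤ d := by rw [abs_mul]; nlinarith [abs_nonneg z]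
  have hbw : |b * w| ≤ d := by rw [abs_mul]; nlinarith [abs_nonneg w]
  linarith [abs_sub y (a * z), abs_sub (y - a * z) (b * w)]

lemma exists_lt_one_forall_abs_le {ι : Type*} [Finite ι] {r : ι → ℝ} (h : ∀ i, |r i| < 1) :
    ∃ c, 0 ≤ c ∧ c < 1 ∧ ∀ i, |r i| ≤ c := by
  rcases isEmpty_or_nonempty ι with hι | hι
  · exact ⟨0, le_rfl, one_pos, fun i => isEmptyElim i⟩
  · obtain ⟨i₀, hi₀⟩ := Finite.exists_max fun i => |r i|
    exact ⟨|r i₀|, abs_nonneg _, h i₀, hi₀⟩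

lemma le_div_one_sub_of_forall_exists_le {X : Type*} [TopologicalSpace X] {s : Set X}
    (hs : IsCompact s) {m : X → ℝ} (hm : ContinuousOn m s) {c e : ℝ} (hc0 : 0 ≤ c)
    (hc1 : c < 1) (hstep : ∀ p ∈ s, ∃ u ∈ s, m p ≤ c * m u + e) :
    ∀ p ∈ s, m p ≤ e / (1 - c) := by
  intro p hp
  obtain ⟨p₀, hp₀, hmax⟩ := hs.exists_isMaxOn ⟨p, hp⟩ hm
  obtain ⟨u, hu, hle⟩ := hstep p₀ hp₀
  have hself : m p₀ ≤ c * m p₀ + e := hle.trans (by gcongr; exact hmax hu)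
  rw [le_div_iff₀ (sub_pos.2 hc1)]
  nlinarith [mul_le_mul_of_nonneg_right (hmax hp : m p ≤ m p₀) (sub_nonneg.2 hc1.le)]

lemma memLp_of_continuousOn_of_eq_zero {X E : Type*} [TopologicalSpace X] [MeasurableSpace X]
    [OpensMeasurableSpace X] [NormedAddCommGroup E] [SecondCountableTopologyEither X E]
    {μ : Measure X} [IsFiniteMeasureOnCompacts μ] {s : Set X} (hs : IsCompact s)
    (hsm : MeasurableSet s) {f : X → E} (hf : ContinuousOn f s) (h0 : ∀ u ∉ s, f u = 0)
    (p : ℝ≥0∞) : MemLp f p μ := by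
  have : IsFiniteMeasure (μ.restrict s) := isFiniteMeasure_restrict.2 hs.measure_ne_top
  rw [← indicator_eq_self.2 (Function.support_subset_iff'.2 h0), memLp_indicator_iff_restrict hsm]
  obtain ⟨C, hC⟩ := hs.exists_bound_of_continuousOn hf
  exact MemLp.of_bound (hf.aestronglyMeasurable hsm) C ((ae_restrict_iff' hsm).2 (ae_of_all _ hC))

theorem isClosed_setOf_exists_mem_aeEq {α E : Type*} [MeasurableSpace α] [NormedAddCommGroup E]
    [NormedSpace ℝ E] {μ : Measure α} {p : ℝ≥0∞} [Fact (1 ≤ p)] (V : Submodule ℝ (α → E))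
    [FiniteDimensional ℝ V] (hV : ∀ f ∈ V, MemLp f p μ) :
    IsClosed {g : Lp E p μ | ∃ f ∈ V, ⇑g =ᵐ[μ] f} := by
  let T : V →ₗ[ℝ] Lp E p μ :=
    { toFun f := (hV f f.2).toLp f
      map_add' f g := MemLp.toLp_add _ _
      map_smul' r f := MemLp.toLp_const_smul r _ }
  have hrange : {g : Lp E p μ | ∃ f ∈ V, ⇑g =ᵐ[μ] f} = LinearMap.range T := by
    ext g
    constructor
    · rintro ⟨f, hf, hgf⟩
      refine ⟨⟨f, hf⟩, ?_⟩
      conv_rhs => rw [← Lp.toLp_coeFn g (Lp.memLp g)]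
      exact (MemLp.toLp_eq_toLp_iff (hV f hf) _).2 hgf.symm
    · rintro ⟨f, rfl⟩
      exact ⟨f, f.2, (hV f f.2).coeFn_toLp⟩
  rw [hrange]
  exact Submodule.closed_of_finiteDimensional _

lemma dist_le_iff_forall_dist_le {ι E F : Type*} [Fintype ι] [PseudoMetricSpace E]
    [PseudoMetricSpace F] {v w : (ι → E) × (ι → F)} {r : ℝ} (hr : 0 ≤ r) :
    dist v w ≤ r ↔ ∀ i, dist (v.1 i, v.2 i) (w.1 i, w.2 i) ≤ r := by
  simp only [Prod.dist_eq, max_le_iff, dist_pi_le_iff hr, forall_and]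

lemma exists_mem_Icc_castSucc_succ {α : Type*} [LinearOrder α] {N : ℕ} (hN : 1 ≤ N)
    {x : Fin (N + 1) → α} {p : α} (hp : p ∈ Icc (x 0) (x (Fin.last N))) :
    ∃ n : Fin N, p ∈ Icc (x n.castSucc) (x n.succ) := by
  obtain ⟨M, rfl⟩ : ∃ M, N = M + 1 := ⟨N - 1, by omega⟩
  by_contra! hnot
  have hbelow : ∀ k, x k ≤ p := by
    intro k
    induction k using Fin.induction with
    | zero => exact hp.1
    | succ n ih => exact (not_le.1 fun h => hnot n ⟨ih, h⟩).le
  exact hnot (Fin.last M) ⟨hbelow _, by rw [Fin.succ_last]; exact hp.2⟩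

section Partition

variable {N : ℕ} {x : Fin (N + 1) → ℝ}

lemma zero_lt_last_of_strictMono (hN : 1 ≤ N) (hx : StrictMono x) : x 0 < x (Fin.last N) :=
  hx (by rw [Fin.lt_def]; simp only [Fin.val_zero, Fin.val_last]; omega)

lemma mem_Icc_of_strictMono (hx : StrictMono x) (i : Fin (N + 1)) :
    x i ∈ Icc (x 0) (x (Fin.last N)) :=
  ⟨hx.monotone (Fin.zero_le i), hx.monotone (Fin.le_last i)⟩

lemma LMap_zero (hx : x 0 ≠ x (Fin.last N)) (n : Fin N) : LMap x n (x 0) = x n.castSucc := by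
  have : x (Fin.last N) - x 0 ≠ 0 := sub_ne_zero.2 hx.symm
  unfold LMap; field_simp; ring

lemma LMap_last (hx : x 0 ≠ x (Fin.last N)) (n : Fin N) :
    LMap x n (x (Fin.last N)) = x n.succ := by
  have : x (Fin.last N) - x 0 ≠ 0 := sub_ne_zero.2 hx.symm
  unfold LMap; field_simp; ring

lemma continuous_LMap (n : Fin N) : Continuous (LMap x n) := by
  unfold LMap; fun_prop

lemma exists_LMap_eq (hN : 1 ≤ N) (hx : StrictMono x) {p : ℝ}
    (hp : p ∈ Icc (x 0) (x (Fin.last N))) :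
    ∃ n : Fin N, ∃ u ∈ Icc (x 0) (x (Fin.last N)), LMap x n u = p := by
  obtain ⟨n, hn⟩ := exists_mem_Icc_castSucc_succ hN hp
  have hlt := zero_lt_last_of_strictMono hN hx
  have hivt := intermediate_value_Icc hlt.le (continuous_LMap (x := x) n).continuousOn
  rw [LMap_zero hlt.ne, LMap_last hlt.ne] at hivt
  exact ⟨n, hivt hn⟩

end Partition

section S0

variable {N : ℕ} {x : Fin (N + 1) → ℝ} {α β γ : Fin N → ℝ}

variable (x α β γ) in
def s0Submodule : Submodule ℝ (ℝ → ℝ × ℝ) where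
  carrier := S0set x α β γ
  zero_mem' := ⟨continuousOn_const, fun _ _ => rfl, 0, fun n u _ => by simp [Prod.mk_zero_zero]⟩
  add_mem' := by
    rintro f g ⟨hfc, hf0, tf, hft⟩ ⟨hgc, hg0, tg, hgt⟩
    refine ⟨hfc.add hgc, fun u hu => by simp [hf0 u hu, hg0 u hu], tf + tg, fun n u hu => ?_⟩
    simp only [Pi.add_apply, hft n u hu, hgt n u hu, Prod.fst_add, Prod.snd_add,
      Prod.mk_add_mk, Prod.mk.injEq]
    constructor <;> ring
  smul_mem' := by
    rintro r f ⟨hfc, hf0, tf, hft⟩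
    refine ⟨hfc.const_smul r, fun u hu => by simp [hf0 u hu], r • tf, fun n u hu => ?_⟩
    simp only [Pi.smul_apply, hft n u hu, Prod.smul_fst, Prod.smul_snd, Prod.smul_mk,
      smul_eq_mul, Prod.mk.injEq]
    constructor <;> ring

lemma FixEq.abs_forcing_le {t : Fin N → (ℝ × ℝ) × (ℝ × ℝ)} {f : ℝ → ℝ × ℝ}
    (hft : FixEq x α β γ t f) (hx : StrictMono x) (hI : x 0 < x (Fin.last N)) {n : Fin N}
    (hα : |α n| ≤ 1) (hβ : |β n| ≤ 1) (hγ : |γ n| ≤ 1) {d : ℝ} (hd : ∀ i, ‖f (x i)‖ ≤ d)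
    {u : ℝ} (hu : u ∈ Icc (x 0) (x (Fin.last N))) :
    |(t n).1.1 * u + (t n).1.2| ≤ 3 * d ∧ |(t n).2.1 * u + (t n).2.2| ≤ 3 * d := by
  have hd0 : |(0 : ℝ)| ≤ d := by simpa using (norm_nonneg _).trans (hd 0)
  have hfst : ∀ i, |(f (x i)).1| ≤ d := fun i => (norm_fst_le _).trans (hd i)
  have hsnd : ∀ i, |(f (x i)).2| ≤ d := fun i => (norm_snd_le _).trans (hd i)
  have hend : ∀ i j, LMap x n (x i) = x j →
      |(t n).1.1 * x i + (t n).1.2| ≤ 3 * d ∧ |(t n).2.1 * x i + (t n).2.2| ≤ 3 * d := by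
    intro i j hij
    have h := hft n (x i) (mem_Icc_of_strictMono hx i)
    rw [hij, Prod.ext_iff] at h
    obtain ⟨h1, h2⟩ := h
    constructor
    · calc |(t n).1.1 * x i + (t n).1.2|
          = |(f (x j)).1 - α n * (f (x i)).1 - β n * (f (x i)).2| := by rw [h1]; ring_nf
        _ ≤ 3 * d := abs_sub_mul_sub_mul_le (hfst j) (hfst i) (hsnd i) hα hβ
    · calc |(t n).2.1 * x i + (t n).2.2| = |(f (x j)).2 - γ n * (f (x i)).2 - 0 * 0| := by
            rw [h2]; ring_nf
        _ ≤ 3 * d := abs_sub_mul_sub_mul_le (hsnd j) (hsnd i) hd0 hγ (by simp)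
  obtain ⟨h01, h02⟩ := hend 0 _ (LMap_zero hI.ne n)
  obtain ⟨hN1, hN2⟩ := hend (Fin.last N) _ (LMap_last hI.ne n)
  exact ⟨abs_affine_le_of_mem_Icc hu h01 hN1, abs_affine_le_of_mem_Icc hu h02 hN2⟩

lemma S0set.abs_snd_le {f : ℝ → ℝ × ℝ} (hf : f ∈ S0set x α β γ) (hN : 1 ≤ N)
    (hx : StrictMono x) (hα : ∀ n, |α n| ≤ 1) (hβ : ∀ n, |β n| ≤ 1) {c : ℝ} (hc0 : 0 ≤ c)
    (hc1 : c < 1) (hγc : ∀ n, |γ n| ≤ c) {d : ℝ} (hd : ∀ i, ‖f (x i)‖ ≤ d) :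
    ∀ p ∈ Icc (x 0) (x (Fin.last N)), |(f p).2| ≤ 3 * d / (1 - c) := by
  obtain ⟨hfc, -, t, hft⟩ := hf
  refine le_div_one_sub_of_forall_exists_le isCompact_Icc hfc.snd.abs hc0 hc1 fun p hp => ?_
  obtain ⟨n, u, hu, rfl⟩ := exists_LMap_eq hN hx hp
  have hQ := (hft.abs_forcing_le hx (zero_lt_last_of_strictMono hN hx) (hα n) (hβ n)
    ((hγc n).trans hc1.le) hd hu).2
  refine ⟨u, hu, ?_⟩
  calc |(f (LMap x n u)).2| = |γ n * (f u).2 + ((t n).2.1 * u + (t n).2.2)| := by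
        rw [hft n u hu]
    _ ≤ |γ n| * |(f u).2| + |(t n).2.1 * u + (t n).2.2| := by
        rw [← abs_mul]; exact abs_add_le _ _
    _ ≤ c * |(f u).2| + 3 * d := by gcongr; exact hγc n

lemma S0set.abs_fst_le {f : ℝ → ℝ × ℝ} (hf : f ∈ S0set x α β γ) (hN : 1 ≤ N)
    (hx : StrictMono x) (hβ : ∀ n, |β n| ≤ 1) (hγ : ∀ n, |γ n| ≤ 1) {a : ℝ} (ha0 : 0 ≤ a)
    (ha1 : a < 1) (hαa : ∀ n, |α n| ≤ a) {d B : ℝ} (hd : ∀ i, ‖f (x i)‖ ≤ d)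
    (hB : ∀ p ∈ Icc (x 0) (x (Fin.last N)), |(f p).2| ≤ B) :
    ∀ p ∈ Icc (x 0) (x (Fin.last N)), |(f p).1| ≤ (B + 3 * d) / (1 - a) := by
  obtain ⟨hfc, -, t, hft⟩ := hf
  refine le_div_one_sub_of_forall_exists_le isCompact_Icc hfc.fst.abs ha0 ha1 fun p hp => ?_
  obtain ⟨n, u, hu, rfl⟩ := exists_LMap_eq hN hx hp
  have hP := (hft.abs_forcing_le hx (zero_lt_last_of_strictMono hN hx)
    ((hαa n).trans ha1.le) (hβ n) (hγ n) hd hu).1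
  have hβB : |β n| * |(f u).2| ≤ B :=
    (mul_le_of_le_one_left (abs_nonneg _) (hβ n)).trans (hB u hu)
  refine ⟨u, hu, ?_⟩
  calc |(f (LMap x n u)).1|
        = |α n * (f u).1 + β n * (f u).2 + ((t n).1.1 * u + (t n).1.2)| := by
        rw [hft n u hu]
    _ ≤ |α n| * |(f u).1| + |β n| * |(f u).2| + |(t n).1.1 * u + (t n).1.2| := by
        rw [← abs_mul, ← abs_mul]; exact abs_add_three _ _ _
    _ ≤ a * |(f u).1| + (B + 3 * d) := by
        have := mul_le_mul_of_nonneg_right (hαa n) (abs_nonneg (f u).1)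
        linarith

theorem S0set.exists_norm_le (hN : 1 ≤ N) (hx : StrictMono x) (hα : ∀ n, |α n| < 1)
    (hγ : ∀ n, |γ n| < 1) (hβγ : ∀ n, |β n| + |γ n| < 1) :
    ∃ K, 0 < K ∧ ∀ f ∈ S0set x α β γ, ∀ d, (∀ i, ‖f (x i)‖ ≤ d) →
      ∀ u ∈ Icc (x 0) (x (Fin.last N)), ‖f u‖ ≤ K * d := by
  obtain ⟨a, ha0, ha1, hαa⟩ := exists_lt_one_forall_abs_le hα
  obtain ⟨c, hc0, hc1, hγc⟩ := exists_lt_one_forall_abs_le hγ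
  have hβ : ∀ n, |β n| ≤ 1 := fun n => by linarith [hβγ n, abs_nonneg (γ n)]
  have hα1 : ∀ n, |α n| ≤ 1 := fun n => (hα n).le
  have hγ1 : ∀ n, |γ n| ≤ 1 := fun n => (hγ n).le
  refine ⟨max ((3 / (1 - c) + 3) / (1 - a)) (3 / (1 - c)), by positivity, ?_⟩
  intro f hf d hd u hu
  have hd0 : 0 ≤ d := (norm_nonneg _).trans (hd 0)
  have hsnd := S0set.abs_snd_le hf hN hx hα1 hβ hc0 hc1 hγc hd
  have hfst := S0set.abs_fst_le hf hN hx hβ hγ1 ha0 ha1 hαa hd hsnd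
  rw [Prod.norm_def, Real.norm_eq_abs, Real.norm_eq_abs, max_mul_of_nonneg _ _ hd0]
  exact max_le_max ((hfst u hu).trans_eq (by ring)) ((hsnd u hu).trans_eq (by ring))

theorem S0set.eq_of_eq_at_nodes (hN : 1 ≤ N) (hx : StrictMono x) (hα : ∀ n, |α n| < 1)
    (hγ : ∀ n, |γ n| < 1) (hβγ : ∀ n, |β n| + |γ n| < 1) {f g : ℝ → ℝ × ℝ}
    (hf : f ∈ S0set x α β γ) (hg : g ∈ S0set x α β γ) (h : ∀ i, f (x i) = g (x i)) : f = g := by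
  obtain ⟨K, -, hK⟩ := S0set.exists_norm_le hN hx hα hγ hβγ
  have hfg : f - g ∈ S0set x α β γ := (s0Submodule x α β γ).sub_mem hf hg
  rw [← sub_eq_zero]
  funext u
  by_cases hu : u ∈ Icc (x 0) (x (Fin.last N))
  · exact norm_le_zero_iff.1 (by simpa using hK _ hfg 0 (fun i => by simp [h i]) u hu)
  · exact hfg.2.1 u hu

theorem finiteDimensional_s0Submodule (hN : 1 ≤ N) (hx : StrictMono x) (hα : ∀ n, |α n| < 1)
    (hγ : ∀ n, |γ n| < 1) (hβγ : ∀ n, |β n| + |γ n| < 1) :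
    FiniteDimensional ℝ (s0Submodule x α β γ) :=
  let nodeValues := (LinearMap.pi fun i => LinearMap.proj (x i)) ∘ₗ (s0Submodule x α β γ).subtype
  FiniteDimensional.of_injective nodeValues fun f g h =>
    Subtype.ext (S0set.eq_of_eq_at_nodes hN hx hα hγ hβγ f.2 g.2 (congrFun h))

lemma S0set.memLp {f : ℝ → ℝ × ℝ} (hf : f ∈ S0set x α β γ) (p : ℝ≥0∞) : MemLp f p volume :=
  memLp_of_continuousOn_of_eq_zero isCompact_Icc measurableSet_Icc hf.1 hf.2.1 p

lemma S01set_eq_map :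
    S01set x α β γ = (s0Submodule x α β γ).map (LinearMap.compLeft (LinearMap.fst ℝ ℝ ℝ) ℝ) := by
  ext g
  simp only [S01set, Submodule.map_coe, mem_ofPred_eq, mem_image, eq_comm (a := g)]
  rfl

end S0

/-- The map `θ` (and its inverse) is continuous from `(ℝ^{N+1} × ℝ^{N+1}, max-metric)`
to `(S₀, d*)` where `d*` is the sup-metric on `I`; consequently `S₀` is a closed and
complete subspace of `L²(ℝ, ℝ²)` and `S₀¹` is a closed subspace of `L²(ℝ)`
(members being extended by zero outside `I`). -/
theorem stmt7 {N : ℕ} (hN : 1 ≤ N) (x : Fin (N + 1) → ℝ) (hx : StrictMono x)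
    (α β γ : Fin N → ℝ) (hα : ∀ n, |α n| < 1) (hγ : ∀ n, |γ n| < 1)
    (hβγ : ∀ n, |β n| + |γ n| < 1)
    (θ : ((Fin (N + 1) → ℝ) × (Fin (N + 1) → ℝ)) → (ℝ → ℝ × ℝ))
    (hθmem : ∀ v, θ v ∈ S0set x α β γ)
    (hθinterp : ∀ (v : (Fin (N + 1) → ℝ) × (Fin (N + 1) → ℝ)) (i : Fin (N + 1)),
      θ v (x i) = (v.1 i, v.2 i)) :
    (∀ v : (Fin (N + 1) → ℝ) × (Fin (N + 1) → ℝ), ∀ ε > (0 : ℝ), ∃ δ > (0 : ℝ),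
      ∀ w, dist v w < δ →
        ∀ u ∈ Icc (x 0) (x (Fin.last N)), ‖θ v u - θ w u‖ ≤ ε) ∧
    (∀ v : (Fin (N + 1) → ℝ) × (Fin (N + 1) → ℝ), ∀ ε > (0 : ℝ), ∃ δ > (0 : ℝ),
      ∀ w, (∀ u ∈ Icc (x 0) (x (Fin.last N)), ‖θ v u - θ w u‖ ≤ δ) →
        dist v w ≤ ε) ∧
    IsClosed {g : Lp (ℝ × ℝ) 2 (volume : Measure ℝ) |
      ∃ f ∈ S0set x α β γ, ⇑g =ᵐ[volume] f} ∧
    IsComplete {g : Lp (ℝ × ℝ) 2 (volume : Measure ℝ) |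
      ∃ f ∈ S0set x α β γ, ⇑g =ᵐ[volume] f} ∧
    IsClosed {g : Lp ℝ 2 (volume : Measure ℝ) |
      ∃ f₁ ∈ S01set x α β γ, ⇑g =ᵐ[volume] f₁} := by
  obtain ⟨K, hK, hnorm⟩ := S0set.exists_norm_le hN hx hα hγ hβγ
  have := finiteDimensional_s0Submodule hN hx hα hγ hβγ
  have hclosed : IsClosed {g : Lp (ℝ × ℝ) 2 (volume : Measure ℝ) |
      ∃ f ∈ S0set x α β γ, ⇑g =ᵐ[volume] f} :=
    isClosed_setOf_exists_mem_aeEq (s0Submodule x α β γ) fun f hf => S0set.memLp hf 2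
  refine ⟨fun v ε hε => ⟨ε / K, by positivity, fun w hvw u hu => ?_⟩,
    fun v ε hε => ⟨ε, hε, fun w hvw => ?_⟩, hclosed, hclosed.isComplete, ?_⟩
  · have hnodes : ∀ i, ‖(θ v - θ w) (x i)‖ ≤ dist v w := by
      simpa [hθinterp, dist_eq_norm] using
        (dist_le_iff_forall_dist_le (v := v) (w := w) dist_nonneg).1 le_rfl
    calc ‖θ v u - θ w u‖
        ≤ K * dist v w := hnorm _ ((s0Submodule x α β γ).sub_mem (hθmem v) (hθmem w)) _ hnodes u hu
      _ ≤ K * (ε / K) := by gcongr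
      _ = ε := mul_div_cancel₀ ε hK.ne'
  · refine (dist_le_iff_forall_dist_le hε.le).2 fun i => ?_
    simpa [hθinterp, dist_eq_norm] using hvw (x i) (mem_Icc_of_strictMono hx i)
  · rw [S01set_eq_map]
    exact isClosed_setOf_exists_mem_aeEq _ fun _ ⟨f, hf, hfg⟩ =>
      hfg ▸ (ContinuousLinearMap.fst ℝ ℝ ℝ).comp_memLp' (S0set.memLp hf 2)
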